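/- Define I(x, y, z) = (y − z)·e^{−x}/z on the open set {(x,y,z) ∈ ℝ³ : z ≠ 0}. Then on this set f·∂I/∂x + g·∂I/∂y + h·∂I/∂z = 0, where f(x,y,z) = x·y·z − x·y − z, g(x,y,z) = x·y²·z − x·y·z² + y² − y·z + z² and h(x,y,z) = (x·y − x·z + y)·z; that is, I is a first integral of the 3D system dx/dt = f, dy/dt = g, dz/dt = h. -/

import Mathlib

/-! Multiplied by `z² eˣ`, the expression `f ∂ₓI + g ∂_yI + h ∂_zI` becomes the polynomial
`−z (y − z) f + z g − y h`, which vanishes identically. -/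

/-- Partial derivative in the `x` direction of a function on `ℝ³`. -/
noncomputable def pdX (F : ℝ × ℝ × ℝ → ℝ) (p : ℝ × ℝ × ℝ) : ℝ :=
  fderiv ℝ F p (1, 0, 0)

/-- Partial derivative in the `y` direction. -/
noncomputable def pdY (F : ℝ × ℝ × ℝ → ℝ) (p : ℝ × ℝ × ℝ) : ℝ :=
  fderiv ℝ F p (0, 1, 0)

/-- Partial derivative in the `z` direction. -/
noncomputable def pdZ (F : ℝ × ℝ × ℝ → ℝ) (p : ℝ × ℝ × ℝ) : ℝ :=
  fderiv ℝ F p (0, 0, 1)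

/-- The first integral `I(x,y,z) = (y − z)·e^{−x}/z`, with the point `p = (x, y, z)`. -/
noncomputable def Iinv : ℝ × ℝ × ℝ → ℝ := fun p =>
  (p.2.1 - p.2.2) * Real.exp (-p.1) / p.2.2

section PartialDerivatives

variable {F : ℝ × ℝ × ℝ → ℝ} {x y z a : ℝ}

theorem pdX_eq_of_hasDerivAt (hF : DifferentiableAt ℝ F (x, y, z))
    (h : HasDerivAt (fun t => F (t, y, z)) a x) : pdX F (x, y, z) = a :=
  (hF.hasFDerivAt.comp_hasDerivAt x
    ((hasDerivAt_id x).prodMk ((hasDerivAt_const x y).prodMk (hasDerivAt_const x z)))).unique h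

theorem pdY_eq_of_hasDerivAt (hF : DifferentiableAt ℝ F (x, y, z))
    (h : HasDerivAt (fun t => F (x, t, z)) a y) : pdY F (x, y, z) = a :=
  (hF.hasFDerivAt.comp_hasDerivAt y
    ((hasDerivAt_const y x).prodMk ((hasDerivAt_id y).prodMk (hasDerivAt_const y z)))).unique h

theorem pdZ_eq_of_hasDerivAt (hF : DifferentiableAt ℝ F (x, y, z))
    (h : HasDerivAt (fun t => F (x, y, t)) a z) : pdZ F (x, y, z) = a :=
  (hF.hasFDerivAt.comp_hasDerivAt z
    ((hasDerivAt_const z x).prodMk ((hasDerivAt_const z y).prodMk (hasDerivAt_id z)))).unique h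

end PartialDerivatives

section Iinv

variable {x y z : ℝ}

theorem differentiableAt_Iinv (hz : z ≠ 0) : DifferentiableAt ℝ Iinv (x, y, z) := by
  unfold Iinv
  fun_prop (disch := exact hz)

theorem pdX_Iinv (hz : z ≠ 0) : pdX Iinv (x, y, z) = -((y - z) * Real.exp (-x) / z) :=
  pdX_eq_of_hasDerivAt (differentiableAt_Iinv hz) <|
    ((((hasDerivAt_neg' x).exp).const_mul (y - z)).div_const z).congr_deriv (by ring)

theorem pdY_Iinv (hz : z ≠ 0) : pdY Iinv (x, y, z) = Real.exp (-x) / z :=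
  pdY_eq_of_hasDerivAt (differentiableAt_Iinv hz) <|
    ((((hasDerivAt_id' y).sub_const z).mul_const (Real.exp (-x))).div_const z).congr_deriv
      (by ring)

theorem pdZ_Iinv (hz : z ≠ 0) : pdZ Iinv (x, y, z) = -(y * Real.exp (-x) / z ^ 2) :=
  pdZ_eq_of_hasDerivAt (differentiableAt_Iinv hz) <|
    ((((hasDerivAt_id' z).const_sub y).mul_const (Real.exp (-x))).div (hasDerivAt_id' z)
      hz).congr_deriv (by ring)

end Iinv

theorem Iinv_is_first_integral_log_system :
    ∀ p : ℝ × ℝ × ℝ, p.2.2 ≠ 0 →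
      (p.1 * p.2.1 * p.2.2 - p.1 * p.2.1 - p.2.2) * pdX Iinv p
        + (p.1 * p.2.1 ^ 2 * p.2.2 - p.1 * p.2.1 * p.2.2 ^ 2 + p.2.1 ^ 2
            - p.2.1 * p.2.2 + p.2.2 ^ 2) * pdY Iinv p
        + ((p.1 * p.2.1 - p.1 * p.2.2 + p.2.1) * p.2.2) * pdZ Iinv p = 0 := by
  rintro ⟨x, y, z⟩ (hz : z ≠ 0)
  rw [pdX_Iinv hz, pdY_Iinv hz, pdZ_Iinv hz]
  field_simp
  ring
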